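/- If H ⊆ G is the subpregeometry induced on a closed subset of a pregeometry G, then the α-function of H is the restriction of the α-function of G: α_H(X) = α_G(X) for every finite X ⊆ H. -/

import Mathlib

open scoped Classical

/-- A combinatorial pregeometry (matroid) on the ground type `α`, given by a
dimension (rank) function on finite subsets. -/
structure Pregeometry (α : Type*) [DecidableEq α] where
  dim : Finset α → ℕ
  dim_empty : dim ∅ = 0
  dim_le_insert : ∀ (A : Finset α) (x : α), dim A ≤ dim (insert x A)
  insert_le_dim : ∀ (A : Finset α) (x : α), dim (insert x A) ≤ dim A + 1
  submodular : ∀ A B : Finset α, dim (A ∪ B) + dim (A ∩ B) ≤ dim A + dim B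

namespace Pregeometry

variable {α : Type*} [DecidableEq α] (G : Pregeometry α)

/-- Closure of an arbitrary subset. -/
def cl (Y : Set α) : Set α :=
  {x | ∃ A : Finset α, ↑A ⊆ Y ∧ G.dim (insert x A) = G.dim A}

/-- `Y` is closed (in the ambient pregeometry `G`). -/
def IsClosed (Y : Set α) : Prop := G.cl Y = Y

/-- `X` is a closed set of the subpregeometry of `G` induced on `P`
(whose closure operator is `Y ↦ cl Y ∩ P`). -/
def IsClosedIn (P X : Set α) : Prop := X ⊆ P ∧ G.cl X ∩ P = X

/-- Dimension of an arbitrary subset, with value `⊤` when infinite-dimensional. -/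
noncomputable def edim (Y : Set α) : ℕ∞ :=
  ⨆ (A : Finset α) (_ : ↑A ⊆ Y), (G.dim A : ℕ∞)

/-- The (natural number) dimension of a finite-dimensional subset. -/
noncomputable def sdim (Y : Set α) : ℕ := (G.edim Y).toNat

/-- The alternating inclusion–exclusion sum
`Δ_G(Σ) = Σ_{∅ ≠ S ⊆ Σ} (-1)^{|S|+1} d(⋂ S)` of a finite collection of sets. -/
noncomputable def flatSum (Sig : Finset (Set α)) : ℤ :=
  ∑ S ∈ Sig.powerset.filter (· ≠ ∅),
    (-1) ^ (S.card + 1) * (G.sdim (⋂₀ ↑S) : ℤ)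

/-- `P ⊑* Q`: for the subpregeometries induced on `P ⊆ Q`, the dimension of the
intersection of two closed sets of `P` equals the dimension of the intersection
of their closures in `Q` (the closure of `X` in `Q` being `cl X ∩ Q`). -/
def SqStar (P Q : Set α) : Prop := P ⊆ Q ∧
  ∀ X₁ X₂ : Set α, G.IsClosedIn P X₁ → G.IsClosedIn P X₂ →
    G.edim (X₁ ∩ X₂) = G.edim (G.cl X₁ ∩ G.cl X₂ ∩ Q)

/-- `P ⊑ Q`: `P` is strongly embedded in `Q`: for every finite collection `Σ` of
finite-dimensional closed sets of `Q`, `Δ_P(Σ_P) ≤ Δ_Q(Σ)` where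
`Σ_P = {E ∩ P : E ∈ Σ}`. -/
def Sq (P Q : Set α) : Prop := P ⊆ Q ∧
  ∀ Sig : Finset (Set α), (∀ E ∈ Sig, G.IsClosedIn Q E) →
    (∀ E ∈ Sig, G.edim E ≠ ⊤) →
    G.flatSum (Sig.image (· ∩ P)) ≤ G.flatSum Sig

/-- The subpregeometry induced on `P` is flat: every finite collection of
finite-dimensional closed sets satisfies `d(⋃ Σ) ≤ Δ(Σ)`. -/
def FlatIn (P : Set α) : Prop :=
  ∀ Sig : Finset (Set α), (∀ E ∈ Sig, G.IsClosedIn P E) →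
    (∀ E ∈ Sig, G.edim E ≠ ⊤) →
    (G.sdim (⋃₀ ↑Sig) : ℤ) ≤ G.flatSum Sig

/-- The α-function of the subpregeometry of `G` induced on `P`:
`α(X) = |X| − d(X) − Σ_{Y ⊊ X closed} α(Y)`. -/
noncomputable def alphaIn (P : Set α) (X : Finset α) : ℤ :=
  (X.card : ℤ) - (G.dim X : ℤ) -
    ∑ Y ∈ (X.powerset.filter fun Y => Y ≠ X ∧ G.IsClosedIn P ↑Y).attach,
      alphaIn P Y.1
termination_by X.card
decreasing_by
  have h := Y.2
  simp only [Finset.mem_filter, Finset.mem_powerset] at h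
  exact Finset.card_lt_card (lt_of_le_of_ne h.1 h.2.1)

end Pregeometry

/-- A hypergraph on the vertex type `α`: a set of nonempty finite edges. -/
structure FileHypergraph (α : Type*) where
  edges : Set (Finset α)
  nonempty_edges : ∀ e ∈ edges, e ≠ ∅

namespace FileHypergraph

variable {α : Type*} [DecidableEq α] (A : FileHypergraph α)

/-- The set of edges contained in a set of vertices. -/
def edgesIn (P : Set α) : Set (Finset α) := {e | e ∈ A.edges ∧ ↑e ⊆ P}

/-- The predimension `δ(P) = |P| − |R[P]|` of a finite set of vertices. -/
noncomputable def delta (P : Finset α) : ℤ :=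
  (P.card : ℤ) - (A.edgesIn ↑P).ncard

/-- The relative predimension `δ(L/P) = |L∖P| − |R[L∪P]∖R[P]|`. -/
noncomputable def deltaRel (L : Finset α) (P : Set α) : ℤ :=
  ((↑L \ P : Set α).ncard : ℤ) -
    ({e | e ∈ A.edges ∧ ↑e ⊆ ↑L ∪ P ∧ ¬ ↑e ⊆ P} : Set (Finset α)).ncard

/-- `P` is self-sufficient in `A`: `δ(X/P) ≥ 0` for every finite `X`, stated so
as to be meaningful even when infinitely many edges are involved. -/
def SelfSuff (P : Set α) : Prop :=
  ∀ X : Finset α, ∀ Es : Finset (Finset α),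
    (∀ e ∈ Es, e ∈ A.edges ∧ ↑e ⊆ ↑X ∪ P ∧ ¬ ↑e ⊆ P) →
    (Es.card : ℤ) ≤ ((↑X \ P : Set α).ncard : ℤ)

/-- The dimension function associated to a hypergraph:
`d(X) = inf {δ(B) : X ⊆ B finite}`. -/
noncomputable def hdim (X : Finset α) : ℤ :=
  sInf {d : ℤ | ∃ B : Finset α, X ⊆ B ∧ d = A.delta B}

/-- The induced subhypergraph on a set `P` of vertices (keeping `α` as the
ambient vertex type). -/
def restrict (P : Set α) : FileHypergraph α :=
  ⟨{e | e ∈ A.edges ∧ ↑e ⊆ P}, fun e he => A.nonempty_edges e he.1⟩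

/-- A pregeometry `G` is represented by the hypergraph `A` if the associated
dimension function of `A` is the dimension function of `G`. -/
def Represents (G : Pregeometry α) : Prop :=
  ∀ X : Finset α, (G.dim X : ℤ) = A.hdim X

end FileHypergraph

namespace Pregeometry

variable {α : Type*} [DecidableEq α] (G : Pregeometry α)

theorem cl_mono {Y Z : Set α} (h : Y ⊆ Z) : G.cl Y ⊆ G.cl Z :=
  fun _ ⟨A, hAY, hA⟩ => ⟨A, hAY.trans h, hA⟩

theorem cl_subset_of_isClosed {P Y : Set α} (hP : G.IsClosed P) (hY : Y ⊆ P) :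
    G.cl Y ⊆ P :=
  hP ▸ G.cl_mono hY

theorem isClosedIn_univ_iff {Y : Set α} : G.IsClosedIn Set.univ Y ↔ G.IsClosed Y := by
  simp [IsClosedIn, IsClosed]

theorem isClosedIn_iff_isClosed {P Y : Set α} (hP : G.IsClosed P) (hY : Y ⊆ P) :
    G.IsClosedIn P Y ↔ G.IsClosed Y := by
  rw [IsClosedIn, IsClosed, Set.inter_eq_left.mpr (G.cl_subset_of_isClosed hP hY)]
  exact and_iff_right hY

theorem alphaIn_eq (P : Set α) (X : Finset α) :
    G.alphaIn P X = (X.card : ℤ) - (G.dim X : ℤ) -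
      ∑ Y ∈ X.powerset.filter (fun Y => Y ≠ X ∧ G.IsClosedIn P ↑Y), G.alphaIn P Y := by
  rw [alphaIn, Finset.sum_attach _ (G.alphaIn P)]

theorem alphaIn_congr {P Q : Set α} {X : Finset α}
    (h : ∀ Y ⊆ X, G.IsClosedIn P ↑Y ↔ G.IsClosedIn Q ↑Y) :
    G.alphaIn P X = G.alphaIn Q X := by
  induction X using Finset.strongInduction with
  | _ X ih =>
    rw [alphaIn_eq, alphaIn_eq]
    have hfilter : X.powerset.filter (fun Y => Y ≠ X ∧ G.IsClosedIn P ↑Y)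
        = X.powerset.filter (fun Y => Y ≠ X ∧ G.IsClosedIn Q ↑Y) :=
      Finset.filter_congr fun Y hY => by rw [h Y (Finset.mem_powerset.mp hY)]
    rw [hfilter]
    refine congrArg _ (Finset.sum_congr rfl fun Y hY => ?_)
    obtain ⟨hYX, hYne, -⟩ := by simpa only [Finset.mem_filter, Finset.mem_powerset] using hY
    exact ih Y (Finset.ssubset_iff_subset_ne.mpr ⟨hYX, hYne⟩)
      fun Z hZ => h Z (hZ.trans hYX)

end Pregeometry

/-- if `H` is the subpregeometry induced on a closed subset `P`
of `G`, then `α_H` is the restriction of `α_G`. -/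
theorem alphaIn_closed_subset {α : Type*} [DecidableEq α] (G : Pregeometry α)
    (P : Set α) (hP : G.IsClosed P) (X : Finset α) (hX : ↑X ⊆ P) :
    G.alphaIn P X = G.alphaIn Set.univ X :=
  G.alphaIn_congr fun Y hY => by
    rw [G.isClosedIn_iff_isClosed hP ((Finset.coe_subset.mpr hY).trans hX),
      G.isClosedIn_univ_iff]
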